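/- arXiv:2109.05991 — 9 statements merged into one kernel-verified Lean document; each statement's English description precedes it below -/
import Mathlib

section
/- For all real numbers t ≥ s ≥ 0 one has 2ν(t − s) ≤ μ_n(t²)·t − μ_n(s²)·s ≤ (σn + 2ν)(t − s). (Lemma 4.2(a) of the paper, inequality (eq:mukey).) -/
/-!
Writing `a = n⁻¹`, one has `μ_n(t²)·t = σ·g(t) + 2νt` with `g(t) = t / √(t² + a²)`.
On `[0, ∞)` the function `g` is nondecreasing and `1/a`-Lipschitz, so the increment
`σ(g(t) - g(s))` lies between `0` and `σn(t - s)`.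
-/

open Real

section
variable {a s t : ℝ}

lemma div_sqrt_sq_add_sq_le_div_sqrt_sq_add_sq (ha : a ≠ 0) (hs : 0 ≤ s) (hst : s ≤ t) :
    s / √(s ^ 2 + a ^ 2) ≤ t / √(t ^ 2 + a ^ 2) := by
  have ht : 0 ≤ t := hs.trans hst
  rw [div_le_div_iff₀ (by positivity) (by positivity),
    ← pow_le_pow_iff_left₀ (by positivity) (by positivity) two_ne_zero, mul_pow, mul_pow,
    sq_sqrt (by positivity), sq_sqrt (by positivity)]
  nlinarith [pow_le_pow_left₀ hs hst 2, sq_nonneg a]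

lemma div_sqrt_sq_add_sq_sub_le (ha : 0 < a) (hs : 0 ≤ s) (hst : s ≤ t) :
    t / √(t ^ 2 + a ^ 2) - s / √(s ^ 2 + a ^ 2) ≤ (t - s) / a := by
  have hsqrt : √(s ^ 2 + a ^ 2) ≤ √(t ^ 2 + a ^ 2) :=
    sqrt_le_sqrt (by nlinarith [pow_le_pow_left₀ hs hst 2])
  have ha_le : a ≤ √(t ^ 2 + a ^ 2) := le_sqrt_of_sq_le (by nlinarith)
  calc t / √(t ^ 2 + a ^ 2) - s / √(s ^ 2 + a ^ 2)
      ≤ t / √(t ^ 2 + a ^ 2) - s / √(t ^ 2 + a ^ 2) := by gcongr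
    _ = (t - s) / √(t ^ 2 + a ^ 2) := by ring
    _ ≤ (t - s) / a := div_le_div_of_nonneg_left (sub_nonneg.2 hst) ha ha_le

end

theorem stmt_0_general (σ ν : ℝ) (hσ : 0 < σ) (n : ℕ) (hn : 0 < n)
    (μ : ℝ → ℝ)
    (hμ : ∀ t, μ t = σ / Real.sqrt (t + ((n : ℝ))⁻¹ ^ 2) + 2 * ν)
    (s t : ℝ) (hs : 0 ≤ s) (hst : s ≤ t) :
    2 * ν * (t - s) ≤ μ (t ^ 2) * t - μ (s ^ 2) * s ∧
      μ (t ^ 2) * t - μ (s ^ 2) * s ≤ (σ * n + 2 * ν) * (t - s) := by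
  set a : ℝ := (n : ℝ)⁻¹
  have ha : 0 < a := by positivity
  have hsplit : μ (t ^ 2) * t - μ (s ^ 2) * s
      = σ * (t / √(t ^ 2 + a ^ 2) - s / √(s ^ 2 + a ^ 2)) + 2 * ν * (t - s) := by
    rw [hμ, hμ]; ring
  have hmono : 0 ≤ σ * (t / √(t ^ 2 + a ^ 2) - s / √(s ^ 2 + a ^ 2)) :=
    mul_nonneg hσ.le (sub_nonneg.2 (div_sqrt_sq_add_sq_le_div_sqrt_sq_add_sq ha.ne' hs hst))
  have hlip : σ * (t / √(t ^ 2 + a ^ 2) - s / √(s ^ 2 + a ^ 2)) ≤ σ * n * (t - s) := by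
    calc _ ≤ σ * ((t - s) / a) := by gcongr; exact div_sqrt_sq_add_sq_sub_le ha hs hst
      _ = σ * n * (t - s) := by simp only [a, div_inv_eq_mul]; ring
  rw [hsplit]
  constructor <;> linarith

/-- Lemma 4.2(a), inequality (eq:mukey): for all real numbers `t ≥ s ≥ 0` one has
`2ν(t − s) ≤ μ_n(t²)·t − μ_n(s²)·s ≤ (σn + 2ν)(t − s)`, where
`μ_n(t) = σ/√(t + n⁻²) + 2ν`. -/
theorem stmt_0 (σ ν : ℝ) (hσ : 0 < σ) (hν : 0 < ν) (n : ℕ) (hn : 0 < n)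
    (μ : ℝ → ℝ)
    (hμ : ∀ t, μ t = σ / Real.sqrt (t + ((n : ℝ))⁻¹ ^ 2) + 2 * ν)
    (s t : ℝ) (hs : 0 ≤ s) (hst : s ≤ t) :
    2 * ν * (t - s) ≤ μ (t ^ 2) * t - μ (s ^ 2) * s ∧
      μ (t ^ 2) * t - μ (s ^ 2) * s ≤ (σ * n + 2 * ν) * (t - s) :=
  stmt_0_general σ ν hσ n hn μ hμ s t hs hst
end

section
/- For every real δ with 0 < δ ≤ 2/(4ν + σn) and every t ≥ 0 one has |1 − δ·μ_n(t)| ≤ 1 − 2δν. (Key pointwise estimate in the proof of Lemma 4.9 on the self-mapping property of the damped Zarantonello map.) -/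
/-- Key pointwise estimate in the proof of Lemma 4.9: for every real `δ` with
`0 < δ ≤ 2/(4ν + σn)` and every `t ≥ 0` one has `|1 − δ·μ_n(t)| ≤ 1 − 2δν`. -/
theorem stmt_2 (σ ν : ℝ) (hσ : 0 < σ) (hν : 0 < ν) (n : ℕ) (hn : 0 < n)
    (μ : ℝ → ℝ)
    (hμ : ∀ t, μ t = σ / Real.sqrt (t + ((n : ℝ))⁻¹ ^ 2) + 2 * ν)
    (δ : ℝ) (hδ0 : 0 < δ) (hδ : δ ≤ 2 / (4 * ν + σ * n))
    (t : ℝ) (ht : 0 ≤ t) :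
    |1 - δ * μ t| ≤ 1 - 2 * δ * ν := by
  have hnpos : (0:ℝ) < (n:ℝ) := by exact_mod_cast hn
  have hinv : (0:ℝ) < ((n:ℝ))⁻¹ := by positivity
  have hsq : Real.sqrt (((n:ℝ))⁻¹ ^ 2) = ((n:ℝ))⁻¹ := Real.sqrt_sq hinv.le
  have hs : ((n:ℝ))⁻¹ ≤ Real.sqrt (t + ((n:ℝ))⁻¹ ^ 2) := by
    have := Real.sqrt_le_sqrt (show ((n:ℝ))⁻¹ ^ 2 ≤ t + ((n:ℝ))⁻¹ ^ 2 by linarith)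
    rwa [hsq] at this
  have hspos : (0:ℝ) < Real.sqrt (t + ((n:ℝ))⁻¹ ^ 2) := lt_of_lt_of_le hinv hs
  have hfrac : σ / Real.sqrt (t + ((n:ℝ))⁻¹ ^ 2) ≤ σ * n := by
    rw [div_le_iff₀ hspos]
    have h1 : σ * n * ((n:ℝ))⁻¹ ≤ σ * n * Real.sqrt (t + ((n:ℝ))⁻¹ ^ 2) :=
      mul_le_mul_of_nonneg_left hs (by positivity)
    have h2 : σ * n * ((n:ℝ))⁻¹ = σ := by field_simp
    linarith
  have hfracpos : 0 < σ / Real.sqrt (t + ((n:ℝ))⁻¹ ^ 2) := by positivity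
  have hden : (0:ℝ) < 4 * ν + σ * n := by positivity
  have hδ2 : δ * (4 * ν + σ * n) ≤ 2 := by
    exact (le_div_iff₀ hden).mp hδ
  rw [hμ t, abs_le]
  constructor <;> nlinarith
end

section
/- For all a, b ∈ E one has ⟨S^n(a) − S^n(b), a − b⟩ ≥ 2ν‖a − b‖². (Pointwise strong monotonicity of the regularised Bingham stress, the core of Lemma 4.2(c), inequality (eq:anstrongmon).) -/
open RealInnerProductSpace

private lemma bingham_aux (σ ν c A B ip : ℝ) (hσ : 0 < σ) (hν : 0 < ν) (hc : 0 < c)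
    (hA0 : 0 ≤ A) (hB0 : 0 ≤ B) (hiple : ip ≤ A * B) :
    (σ / Real.sqrt (A ^ 2 + c) + 2 * ν) * (A ^ 2 - ip)
      + (σ / Real.sqrt (B ^ 2 + c) + 2 * ν) * (B ^ 2 - ip)
      ≥ 2 * ν * (A ^ 2 - 2 * ip + B ^ 2) := by
  set α := Real.sqrt (A ^ 2 + c) with hα
  set β := Real.sqrt (B ^ 2 + c) with hβ
  have hαpos : 0 < α := Real.sqrt_pos.mpr (by positivity)
  have hβpos : 0 < β := Real.sqrt_pos.mpr (by positivity)
  have hα2 : α ^ 2 = A ^ 2 + c := Real.sq_sqrt (by positivity)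
  have hβ2 : β ^ 2 = B ^ 2 + c := Real.sq_sqrt (by positivity)
  have key : 0 ≤ (A - B) * (A * β - B * α) := by
    rcases le_or_gt (A * β + B * α) 0 with h | h
    · have hA' : A = 0 := by nlinarith [mul_nonneg hA0 hβpos.le, mul_nonneg hB0 hαpos.le]
      have hB' : B = 0 := by nlinarith [mul_nonneg hA0 hβpos.le, mul_nonneg hB0 hαpos.le]
      simp [hA', hB']
    · have h2 : (A - B) * (A * β - B * α) * (A * β + B * α) = c * (A - B) ^ 2 * (A + B) := by
        linear_combination ((A - B) * A ^ 2) * hβ2 - ((A - B) * B ^ 2) * hα2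
      nlinarith [mul_nonneg (mul_nonneg hc.le (sq_nonneg (A - B))) (by positivity : (0:ℝ) ≤ A + B)]
  have hfin : 0 ≤ σ / α * (A ^ 2 - ip) + σ / β * (B ^ 2 - ip) := by
    have h1 : A * (A - B) ≤ A ^ 2 - ip := by nlinarith
    have h2 : B * (B - A) ≤ B ^ 2 - ip := by nlinarith
    have h3 : 0 ≤ σ / α := by positivity
    have h4 : 0 ≤ σ / β := by positivity
    have h5 : 0 ≤ σ / α * (A * (A - B)) + σ / β * (B * (B - A)) := by
      have hdiv := div_nonneg (mul_nonneg hσ.le key) (mul_pos hαpos hβpos).le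
      have heq : σ / α * (A * (A - B)) + σ / β * (B * (B - A))
          = σ * ((A - B) * (A * β - B * α)) / (α * β) := by
        field_simp; ring
      rw [heq]; exact hdiv
    linarith [mul_le_mul_of_nonneg_left h1 h3, mul_le_mul_of_nonneg_left h2 h4]
  nlinarith [hfin]

/-- Core of Lemma 4.2(c), inequality (eq:anstrongmon): pointwise strong monotonicity of the
Bercovier–Engelman regularised Bingham stress `S^n(x) = (σ/|x|_n + 2ν)x`:
`⟨S^n(a) − S^n(b), a − b⟩ ≥ 2ν‖a − b‖²`. -/
theorem stmt_4 {E : Type*} [NormedAddCommGroup E] [InnerProductSpace ℝ E]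
    (σ ν : ℝ) (hσ : 0 < σ) (hν : 0 < ν) (n : ℕ) (hn : 0 < n)
    (S : E → E)
    (hS : ∀ x, S x = (σ / Real.sqrt (‖x‖ ^ 2 + ((n : ℝ))⁻¹ ^ 2) + 2 * ν) • x)
    (a b : E) :
    ⟪S a - S b, a - b⟫ ≥ 2 * ν * ‖a - b‖ ^ 2 := by
  have hc : (0:ℝ) < ((n : ℝ))⁻¹ ^ 2 := by positivity
  have hexp : (⟪S a - S b, a - b⟫ : ℝ)
      = (σ / Real.sqrt (‖a‖ ^ 2 + ((n : ℝ))⁻¹ ^ 2) + 2 * ν) * (‖a‖ ^ 2 - ⟪a, b⟫)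
        + (σ / Real.sqrt (‖b‖ ^ 2 + ((n : ℝ))⁻¹ ^ 2) + 2 * ν) * (‖b‖ ^ 2 - ⟪a, b⟫) := by
    rw [hS, hS, inner_sub_left, real_inner_smul_left, real_inner_smul_left,
      inner_sub_right, inner_sub_right, real_inner_self_eq_norm_sq,
      real_inner_self_eq_norm_sq, real_inner_comm b a]
    ring
  have hnorm : ‖a - b‖ ^ 2 = ‖a‖ ^ 2 - 2 * ⟪a, b⟫ + ‖b‖ ^ 2 := norm_sub_sq_real a b
  rw [hexp, hnorm]
  exact bingham_aux σ ν _ ‖a‖ ‖b‖ _ hσ hν hc (norm_nonneg a) (norm_nonneg b)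
    (real_inner_le_norm a b)
end

section
/- For all a, b ∈ E one has ‖S^n(a) − S^n(b)‖ ≤ (√3·σn + 2ν)·‖a − b‖. (Pointwise Lipschitz continuity of the regularised Bingham stress, the core of the Lipschitz bound (eq:anlipschitz) in Lemma 4.2(c).) -/
/-!
The stress is `σ • N a + 2ν • a` with `N a = a / √(‖a‖² + ε²)`, `ε = 1/n`. Lifting `a` to
`(a, ε) ∈ E × ℝ` with the Euclidean product norm, `N a` is the `E`-component of the unit vector
in the direction of `(a, ε)`. On an inner product space
`‖x/‖x‖ - y/‖y‖‖² · ‖x‖‖y‖ = 2‖x‖‖y‖ - 2⟪x, y⟫ ≤ ‖x - y‖²`, and the lifted vectors have norm at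
least `ε` and difference `(a - b, 0)`, so `N` is `1/ε = n`-Lipschitz.
-/

open scoped InnerProductSpace

theorem norm_normalize_sub_normalize_sq_mul_le {F : Type*} [NormedAddCommGroup F]
    [InnerProductSpace ℝ F] (x y : F) :
    ‖NormedSpace.normalize x - NormedSpace.normalize y‖ ^ 2 * (‖x‖ * ‖y‖) ≤ ‖x - y‖ ^ 2 := by
  rcases eq_or_ne x 0 with rfl | hx
  · simp
  rcases eq_or_ne y 0 with rfl | hy
  · simp
  have hx' : 0 < ‖x‖ := norm_pos_iff.2 hx
  have hy' : 0 < ‖y‖ := norm_pos_iff.2 hy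
  have h : ‖NormedSpace.normalize x - NormedSpace.normalize y‖ ^ 2 * (‖x‖ * ‖y‖) =
      2 * (‖x‖ * ‖y‖) - 2 * ⟪x, y⟫_ℝ := by
    rw [norm_sub_sq_real, NormedSpace.norm_normalize hx, NormedSpace.norm_normalize hy,
      NormedSpace.normalize, NormedSpace.normalize, real_inner_smul_left, real_inner_smul_right]
    field_simp
    ring
  rw [h, norm_sub_sq_real]
  nlinarith [sq_nonneg (‖x‖ - ‖y‖)]

theorem norm_inv_sqrt_smul_sub_le {E : Type*} [NormedAddCommGroup E] [InnerProductSpace ℝ E]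
    {ε : ℝ} (hε : 0 < ε) (a b : E) :
    ‖(√(‖a‖ ^ 2 + ε ^ 2))⁻¹ • a - (√(‖b‖ ^ 2 + ε ^ 2))⁻¹ • b‖ ≤ ε⁻¹ * ‖a - b‖ := by
  set y : WithLp 2 (E × ℝ) := WithLp.toLp 2 (a, ε)
  set z : WithLp 2 (E × ℝ) := WithLp.toLp 2 (b, ε)
  have hy : ‖y‖ = √(‖a‖ ^ 2 + ε ^ 2) := by simp [y, WithLp.prod_norm_eq_of_L2]
  have hz : ‖z‖ = √(‖b‖ ^ 2 + ε ^ 2) := by simp [z, WithLp.prod_norm_eq_of_L2]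
  have hyz : ‖y - z‖ = ‖a - b‖ := by simp [y, z, WithLp.prod_norm_eq_of_L2]
  have hε_le (c : E) : ε ≤ √(‖c‖ ^ 2 + ε ^ 2) :=
    Real.le_sqrt_of_sq_le (by nlinarith [norm_nonneg c])
  have hfst : (NormedSpace.normalize y - NormedSpace.normalize z).fst =
      (√(‖a‖ ^ 2 + ε ^ 2))⁻¹ • a - (√(‖b‖ ^ 2 + ε ^ 2))⁻¹ • b := by
    simp only [NormedSpace.normalize, WithLp.sub_fst, WithLp.smul_fst, hy, hz]
    rfl
  rw [← hfst, le_inv_mul_iff₀ hε]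
  set d := NormedSpace.normalize y - NormedSpace.normalize z
  have hd : (ε * ‖d‖) ^ 2 ≤ ‖a - b‖ ^ 2 := calc
    (ε * ‖d‖) ^ 2 = ‖d‖ ^ 2 * ε ^ 2 := by ring
    _ ≤ ‖d‖ ^ 2 * (‖y‖ * ‖z‖) := by
      rw [sq ε, hy, hz]; gcongr <;> exact hε_le _
    _ ≤ ‖y - z‖ ^ 2 := norm_normalize_sub_normalize_sq_mul_le y z
    _ = ‖a - b‖ ^ 2 := by rw [hyz]
  calc ε * ‖d.fst‖ ≤ ε * ‖d‖ := by gcongr; exact WithLp.norm_fst_le E d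
    _ ≤ ‖a - b‖ := (pow_le_pow_iff_left₀ (by positivity) (norm_nonneg _) two_ne_zero).1 hd

theorem norm_regularizedBingham_sub_le {E : Type*} [NormedAddCommGroup E]
    [InnerProductSpace ℝ E] {σ c ε : ℝ} (hσ : 0 ≤ σ) (hc : 0 ≤ c) (hε : 0 < ε) (a b : E) :
    ‖(σ / √(‖a‖ ^ 2 + ε ^ 2) + c) • a - (σ / √(‖b‖ ^ 2 + ε ^ 2) + c) • b‖ ≤
      (σ * ε⁻¹ + c) * ‖a - b‖ := by
  have hsplit : (σ / √(‖a‖ ^ 2 + ε ^ 2) + c) • a - (σ / √(‖b‖ ^ 2 + ε ^ 2) + c) • b =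
      σ • ((√(‖a‖ ^ 2 + ε ^ 2))⁻¹ • a - (√(‖b‖ ^ 2 + ε ^ 2))⁻¹ • b) + c • (a - b) := by
    simp only [div_eq_mul_inv]
    module
  rw [hsplit]
  calc _ ≤ σ * ‖(√(‖a‖ ^ 2 + ε ^ 2))⁻¹ • a - (√(‖b‖ ^ 2 + ε ^ 2))⁻¹ • b‖ + c * ‖a - b‖ := by
        grw [norm_add_le, norm_smul_of_nonneg hσ, norm_smul_of_nonneg hc]
    _ ≤ σ * (ε⁻¹ * ‖a - b‖) + c * ‖a - b‖ := by grw [norm_inv_sqrt_smul_sub_le hε]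
    _ = (σ * ε⁻¹ + c) * ‖a - b‖ := by ring

/-- Core of the Lipschitz bound (eq:anlipschitz) in Lemma 4.2(c): pointwise Lipschitz continuity
of the Bercovier–Engelman regularised Bingham stress:
`‖S^n(a) − S^n(b)‖ ≤ (√3·σn + 2ν)·‖a − b‖`. -/
theorem stmt_5 {E : Type*} [NormedAddCommGroup E] [InnerProductSpace ℝ E]
    (σ ν : ℝ) (hσ : 0 < σ) (hν : 0 < ν) (n : ℕ) (hn : 0 < n)
    (S : E → E)
    (hS : ∀ x, S x = (σ / Real.sqrt (‖x‖ ^ 2 + ((n : ℝ))⁻¹ ^ 2) + 2 * ν) • x)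
    (a b : E) :
    ‖S a - S b‖ ≤ (Real.sqrt 3 * σ * n + 2 * ν) * ‖a - b‖ := by
  have hσn : σ * n ≤ √3 * σ * n := by
    rw [mul_assoc]
    exact le_mul_of_one_le_left (by positivity) (Real.one_le_sqrt.2 (by norm_num))
  rw [hS, hS]
  calc _ ≤ (σ * (n : ℝ)⁻¹⁻¹ + 2 * ν) * ‖a - b‖ :=
        norm_regularizedBingham_sub_le hσ.le (by positivity) (by positivity) a b
    _ ≤ (√3 * σ * n + 2 * ν) * ‖a - b‖ := by rw [inv_inv]; gcongr
end

section
/- Suppose: (i) for every w ∈ X, a(w; ·, ·) is a symmetric bilinear form on X with a(w; v, v) ≥ ν‖v‖² for all v ∈ X; (ii) f : X → ℝ is linear; (iii) H : X → ℝ satisfies H(u) − H(v) ≥ ½a(u; u, u) − ½a(u; v, v) − f(u) + f(v) for all u, v ∈ X. If u, w ∈ X satisfy the Kačanov update equation a(u; w, v) = f(v) for all v ∈ X, then H(u) − H(w) ≥ (ν/2)‖u − w‖². (Abstract form of the energy-decay property (eq:hnmono) of the Kačanov iteration for the regularised Bingham energy H_n.) -/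
/-- Abstract form of the energy-decay property (eq:hnmono) of the Kačanov iteration:
if `a(w;·,·)` is symmetric bilinear and `ν`-coercive for every `w`, `f` is linear, `H` satisfies
`H(u) − H(v) ≥ ½a(u;u,u) − ½a(u;v,v) − f(u) + f(v)`, and `w` solves the Kačanov update
`a(u;w,v) = f(v)` for all `v`, then `H(u) − H(w) ≥ (ν/2)‖u − w‖²`. -/
theorem stmt_10 {X : Type*} [NormedAddCommGroup X] [NormedSpace ℝ X]
    (ν : ℝ) (hν : 0 < ν)
    (a : X → X →ₗ[ℝ] X →ₗ[ℝ] ℝ)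
    (hsymm : ∀ w v h, a w v h = a w h v)
    (hcoer : ∀ w v, a w v v ≥ ν * ‖v‖ ^ 2)
    (f : X →ₗ[ℝ] ℝ)
    (H : X → ℝ)
    (hH : ∀ u v, H u - H v ≥ (1 / 2) * a u u u - (1 / 2) * a u v v - f u + f v)
    (u w : X) (hupdate : ∀ v, a u w v = f v) :
    H u - H w ≥ (ν / 2) * ‖u - w‖ ^ 2 := by
  have key : (1 / 2 : ℝ) * a u u u - (1 / 2) * a u w w - f u + f w
      = (1 / 2) * a u (u - w) (u - w) := by
    rw [← hupdate u, ← hupdate w]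
    have h1 := hsymm u w u
    simp only [map_sub, LinearMap.sub_apply]
    linarith
  have h2 := hH u w
  have h3 := hcoer u (u - w)
  rw [key] at h2
  nlinarith
end

section
/- Suppose: (i) for every w ∈ X, a(w; ·, ·) is a bilinear form on X with |a(w; v, h)| ≤ M‖v‖‖h‖ for all v, h ∈ X; (ii) the associated nonlinear map is strongly monotone in the sense that a(u; u, u − v) − a(v; v, u − v) ≥ ν‖u − v‖² for all u, v ∈ X; (iii) f : X → ℝ is linear. If u⋆ ∈ X satisfies a(u⋆; u⋆, v) = f(v) for all v ∈ X, and u, w ∈ X satisfy the Kačanov update equation a(u; w, v) = f(v) for all v ∈ X, then ‖u − u⋆‖ ≤ (M/ν)‖w − u‖. (Abstract form of the a posteriori error estimate (eq:aposterioriconfree) of Theorem 4.6; in the paper M = σn + 2ν, giving ‖U_N^{n,ℓ} − U_N^n‖_{1,2} ≤ ((σn + 2ν)/ν)‖U_N^{n,ℓ+1} − U_N^{n,ℓ}‖_{1,2}.) -/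
/-- Abstract form of the a posteriori error estimate (eq:aposterioriconfree) of Theorem 4.6:
if `a(w;·,·)` is bilinear with `|a(w;v,h)| ≤ M‖v‖‖h‖`, the associated nonlinear map is strongly
monotone, `f` is linear, `u⋆` solves `a(u⋆;u⋆,v) = f(v)` and `w` solves the Kačanov update
`a(u;w,v) = f(v)`, then `‖u − u⋆‖ ≤ (M/ν)‖w − u‖`. -/
theorem stmt_11 {X : Type*} [NormedAddCommGroup X] [NormedSpace ℝ X]
    (ν M : ℝ) (hν : 0 < ν) (hM : ν ≤ M)
    (a : X → X →ₗ[ℝ] X →ₗ[ℝ] ℝ)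
    (hbound : ∀ w v h, |a w v h| ≤ M * ‖v‖ * ‖h‖)
    (hmono : ∀ u v, a u u (u - v) - a v v (u - v) ≥ ν * ‖u - v‖ ^ 2)
    (f : X →ₗ[ℝ] ℝ)
    (ustar : X) (hstar : ∀ v, a ustar ustar v = f v)
    (u w : X) (hupdate : ∀ v, a u w v = f v) :
    ‖u - ustar‖ ≤ (M / ν) * ‖w - u‖ := by
  rcases eq_or_ne (u - ustar) 0 with h0 | h0
  · rw [h0, norm_zero]
    exact mul_nonneg (div_nonneg (hν.le.trans hM) hν.le) (norm_nonneg _)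
  · have hn : 0 < ‖u - ustar‖ := norm_pos_iff.mpr h0
    have key : ν * ‖u - ustar‖ ^ 2 ≤ M * ‖u - w‖ * ‖u - ustar‖ := by
      have h1 := hmono u ustar
      have h2 : a ustar ustar (u - ustar) = a u w (u - ustar) := by
        rw [hstar, hupdate]
      have h3 : a u u (u - ustar) - a ustar ustar (u - ustar)
          = a u (u - w) (u - ustar) := by
        rw [h2, show (a u) (u - w) = a u u - a u w from map_sub (a u) u w,
          LinearMap.sub_apply]
      calc ν * ‖u - ustar‖ ^ 2 ≤ a u (u - w) (u - ustar) := by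
            rw [← h3]; exact h1
        _ ≤ M * ‖u - w‖ * ‖u - ustar‖ :=
            (abs_le.mp (abs_le.mpr ⟨neg_abs_le _, le_abs_self _⟩)).2.trans
              (hbound u (u - w) (u - ustar))
    have : ν * ‖u - ustar‖ ≤ M * ‖u - w‖ := by
      have := mul_le_mul_of_nonneg_right key (le_of_lt (inv_pos.mpr hn))
      calc ν * ‖u - ustar‖ = ν * ‖u - ustar‖ ^ 2 * (‖u - ustar‖)⁻¹ := by
            field_simp
        _ ≤ M * ‖u - w‖ * ‖u - ustar‖ * (‖u - ustar‖)⁻¹ := this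
        _ = M * ‖u - w‖ := by field_simp
    rw [show w - u = -(u - w) by abel, norm_neg, div_mul_eq_mul_div, le_div_iff₀ hν]
    linarith [this]
end

section
/- Set M := σn + 2ν, L := √3·σn + 2ν and q := 1 − ν³/(L·M²). Let H : X → ℝ, u⋆ ∈ X, and let (u_ℓ)_{ℓ≥0} be a sequence in X such that for every ℓ: (i) H(u_ℓ) − H(u_{ℓ+1}) ≥ (ν/2)‖u_{ℓ+1} − u_ℓ‖²; (ii) ‖u_ℓ − u⋆‖ ≤ (M/ν)‖u_{ℓ+1} − u_ℓ‖; (iii) (ν/2)‖u_ℓ − u⋆‖² ≤ H(u_ℓ) − H(u⋆) ≤ (L/2)‖u_ℓ − u⋆‖². Then q ∈ (0,1) and H(u_{ℓ+1}) − H(u⋆) ≤ q·(H(u_ℓ) − H(u⋆)) for every ℓ, i.e. H contracts along the sequence with contraction factor q_con = 1 − ν³/((√3σn + 2ν)(σn + 2ν)²). (Theorem 4.6, inequality (eq:hncontraction), stated with the three inequalities it is derived from — the energy decay (eq:hnmono), the a posteriori bound (eq:aposterioriconfree) and the energy–norm equivalence (eq:equiv) — as hypotheses.) -/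
/-- Theorem 4.6, inequality (eq:hncontraction): with `M = σn + 2ν`, `L = √3σn + 2ν` and
`q = 1 − ν³/(LM²)`, if the sequence `(u_ℓ)` satisfies the energy decay (eq:hnmono), the a
posteriori bound (eq:aposterioriconfree) and the energy–norm equivalence (eq:equiv), then
`q ∈ (0,1)` and `H(u_{ℓ+1}) − H(u⋆) ≤ q(H(u_ℓ) − H(u⋆))` for every `ℓ`. -/
theorem stmt_12 {X : Type*} [NormedAddCommGroup X]
    (σ ν : ℝ) (hσ : 0 < σ) (hν : 0 < ν) (n : ℕ) (hn : 0 < n)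
    (M L q : ℝ)
    (hM : M = σ * n + 2 * ν) (hL : L = Real.sqrt 3 * σ * n + 2 * ν)
    (hq : q = 1 - ν ^ 3 / (L * M ^ 2))
    (H : X → ℝ) (ustar : X) (u : ℕ → X)
    (h1 : ∀ ℓ : ℕ, H (u ℓ) - H (u (ℓ + 1)) ≥ (ν / 2) * ‖u (ℓ + 1) - u ℓ‖ ^ 2)
    (h2 : ∀ ℓ : ℕ, ‖u ℓ - ustar‖ ≤ (M / ν) * ‖u (ℓ + 1) - u ℓ‖)
    (h3 : ∀ ℓ : ℕ, (ν / 2) * ‖u ℓ - ustar‖ ^ 2 ≤ H (u ℓ) - H ustar ∧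
                   H (u ℓ) - H ustar ≤ (L / 2) * ‖u ℓ - ustar‖ ^ 2) :
    (0 < q ∧ q < 1) ∧
      ∀ ℓ : ℕ, H (u (ℓ + 1)) - H ustar ≤ q * (H (u ℓ) - H ustar) := by
  have hn' : (1:ℝ) ≤ n := by exact_mod_cast hn
  have hs3 : (0:ℝ) ≤ Real.sqrt 3 := Real.sqrt_nonneg 3
  have hM2 : 2 * ν ≤ M := by nlinarith
  have hL2 : 2 * ν ≤ L := by nlinarith
  have hMpos : 0 < M := by linarith
  have hLpos : 0 < L := by linarith
  have hM2sq : (2*ν)^2 ≤ M^2 := by nlinarith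
  have hLM : ν ^ 3 < L * M ^ 2 := by
    have h8 : 8 * ν^3 ≤ L * M^2 := by nlinarith [mul_le_mul hL2 hM2sq (by positivity : (0:ℝ) ≤ (2*ν)^2) hLpos.le]
    nlinarith [pow_pos hν 3]
  have hLMpos : 0 < L * M ^ 2 := by positivity
  refine ⟨⟨by rw [hq, sub_pos, div_lt_one hLMpos]; exact hLM,
          by rw [hq]
             have : 0 < ν ^ 3 / (L * M ^ 2) := by positivity
             linarith⟩, fun ℓ => ?_⟩
  have h1' := h1 ℓ
  have h2' := h2 ℓ
  have h3l := (h3 ℓ).1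
  have h3u := (h3 ℓ).2
  have hd0 : 0 ≤ ‖u ℓ - ustar‖ := norm_nonneg _
  have he0 : 0 ≤ ‖u (ℓ+1) - u ℓ‖ := norm_nonneg _
  have h2'' : ν * ‖u ℓ - ustar‖ ≤ M * ‖u (ℓ+1) - u ℓ‖ := by
    rw [mul_comm]
    calc ‖u ℓ - ustar‖ * ν ≤ (M / ν) * ‖u (ℓ+1) - u ℓ‖ * ν :=
          mul_le_mul_of_nonneg_right h2' hν.le
      _ = M * ‖u (ℓ+1) - u ℓ‖ := by field_simp
  have hsq : ν^2 * ‖u ℓ - ustar‖^2 ≤ M^2 * ‖u (ℓ+1) - u ℓ‖^2 := by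
    have := pow_le_pow_left₀ (by positivity) h2'' 2
    nlinarith
  have key : ν ^ 3 / (L * M ^ 2) * (H (u ℓ) - H ustar) ≤ H (u ℓ) - H (u (ℓ+1)) := by
    rw [div_mul_eq_mul_div, div_le_iff₀ hLMpos]
    have a1 : ν^3 * (H (u ℓ) - H ustar) ≤ ν^3 * ((L/2) * ‖u ℓ - ustar‖^2) :=
      mul_le_mul_of_nonneg_left h3u (by positivity)
    have a2 : L * ν * (ν^2 * ‖u ℓ - ustar‖^2) ≤ L * ν * (M^2 * ‖u (ℓ+1) - u ℓ‖^2) :=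
      mul_le_mul_of_nonneg_left hsq (by positivity)
    have a3 : L * M^2 * ((ν/2) * ‖u (ℓ+1) - u ℓ‖^2) ≤ L * M^2 * (H (u ℓ) - H (u (ℓ+1))) :=
      mul_le_mul_of_nonneg_left h1' (by positivity)
    linarith only [a1, a2, a3]
  rw [hq]; linarith only [key]
end

section
/- Set M := σn + 2ν, L := √3·σn + 2ν and q := 1 − ν³/(L·M²). Let H : X → ℝ, u⋆ ∈ X, and let (u_ℓ)_{ℓ≥0} be a sequence in X such that for every ℓ: (i) H(u_ℓ) − H(u_{ℓ+1}) ≥ (ν/2)‖u_{ℓ+1} − u_ℓ‖²; (ii) ‖u_ℓ − u⋆‖ ≤ (M/ν)‖u_{ℓ+1} − u_ℓ‖; (iii) (ν/2)‖u_ℓ − u⋆‖² ≤ H(u_ℓ) − H(u⋆) ≤ (L/2)‖u_ℓ − u⋆‖². Then for every ℓ one has ‖u_ℓ − u⋆‖ ≤ √(L/ν)·q^{ℓ/2}·‖u_0 − u⋆‖; in particular u_ℓ → u⋆ in X as ℓ → ∞. (Corollary 4.7, inequality (eq:kacanovvelocityconvergence), stated with the inequalities from which it is derived as hypotheses; in the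 paper √(L/ν) = √((√3σn + 2ν)/ν).) -/
/-- Corollary 4.7, inequality (eq:kacanovvelocityconvergence): under the hypotheses of
Theorem 4.6 one has `‖u_ℓ − u⋆‖ ≤ √(L/ν)·q^{ℓ/2}·‖u_0 − u⋆‖` for every `ℓ`; in particular
`u_ℓ → u⋆` as `ℓ → ∞`. -/
theorem stmt_13 {X : Type*} [NormedAddCommGroup X]
    (σ ν : ℝ) (hσ : 0 < σ) (hν : 0 < ν) (n : ℕ) (hn : 0 < n)
    (M L q : ℝ)
    (hM : M = σ * n + 2 * ν) (hL : L = Real.sqrt 3 * σ * n + 2 * ν)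
    (hq : q = 1 - ν ^ 3 / (L * M ^ 2))
    (H : X → ℝ) (ustar : X) (u : ℕ → X)
    (h1 : ∀ ℓ : ℕ, H (u ℓ) - H (u (ℓ + 1)) ≥ (ν / 2) * ‖u (ℓ + 1) - u ℓ‖ ^ 2)
    (h2 : ∀ ℓ : ℕ, ‖u ℓ - ustar‖ ≤ (M / ν) * ‖u (ℓ + 1) - u ℓ‖)
    (h3 : ∀ ℓ : ℕ, (ν / 2) * ‖u ℓ - ustar‖ ^ 2 ≤ H (u ℓ) - H ustar ∧
                   H (u ℓ) - H ustar ≤ (L / 2) * ‖u ℓ - ustar‖ ^ 2) :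
    (∀ ℓ : ℕ, ‖u ℓ - ustar‖ ≤ Real.sqrt (L / ν) * q ^ ((ℓ : ℝ) / 2) * ‖u 0 - ustar‖) ∧
    Filter.Tendsto u Filter.atTop (nhds ustar) := by
  have hσn : (0:ℝ) < σ * n := by positivity
  have hs3 : (1:ℝ) ≤ Real.sqrt 3 := by
    rw [show (1:ℝ) = Real.sqrt 1 by simp]
    exact Real.sqrt_le_sqrt (by norm_num)
  have hM2 : 2 * ν ≤ M := by nlinarith
  have hL2 : 2 * ν ≤ L := by nlinarith
  have hMpos : 0 < M := by linarith
  have hLpos : 0 < L := by linarith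
  have hLM : ν ^ 3 * 8 ≤ L * M ^ 2 := by
    have hMM : (2 * ν) ^ 2 ≤ M ^ 2 := by nlinarith
    have h8 : (2 * ν) * (2 * ν) ^ 2 ≤ L * M ^ 2 :=
      mul_le_mul hL2 hMM (by positivity) hLpos.le
    nlinarith
  have hν3 : 0 < ν ^ 3 := by positivity
  have hq0 : 0 < q := by
    rw [hq, sub_pos, div_lt_one (by positivity)]
    linarith
  have hq1 : q < 1 := by
    rw [hq]
    have : 0 < ν ^ 3 / (L * M ^ 2) := by positivity
    linarith
  obtain ⟨E, hE⟩ : ∃ E : ℕ → ℝ, ∀ ℓ, E ℓ = H (u ℓ) - H ustar :=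
    ⟨fun ℓ => H (u ℓ) - H ustar, fun _ => rfl⟩
  have hE0 : ∀ ℓ, 0 ≤ E ℓ := fun ℓ => (hE ℓ) ▸ le_trans (by positivity) (h3 ℓ).1
  have step : ∀ ℓ, E (ℓ + 1) ≤ q * E ℓ := by
    intro ℓ
    have a := h1 ℓ
    have b := h2 ℓ
    have c : E ℓ ≤ (L / 2) * ‖u ℓ - ustar‖ ^ 2 := (hE ℓ) ▸ (h3 ℓ).2
    have b2 : ‖u ℓ - ustar‖ ^ 2 ≤ (M / ν) ^ 2 * ‖u (ℓ + 1) - u ℓ‖ ^ 2 := by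
      have hb0 : 0 ≤ ‖u ℓ - ustar‖ := norm_nonneg _
      nlinarith [norm_nonneg (u (ℓ + 1) - u ℓ)]
    -- E ℓ - E (ℓ+1) = H (u ℓ) - H (u (ℓ+1))
    have key : ν ^ 3 / (L * M ^ 2) * E ℓ ≤ E ℓ - E (ℓ + 1) := by
      have h4 : (ν ^ 3) / (2 * M ^ 2) * ‖u ℓ - ustar‖ ^ 2 ≤ E ℓ - E (ℓ + 1) := by
        have : (ν ^ 3) / (2 * M ^ 2) * ‖u ℓ - ustar‖ ^ 2
            ≤ (ν / 2) * ‖u (ℓ + 1) - u ℓ‖ ^ 2 := by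
          have hmul := mul_le_mul_of_nonneg_left b2
            (show (0:ℝ) ≤ ν ^ 3 / (2 * M ^ 2) by positivity)
          have heq : ν ^ 3 / (2 * M ^ 2) * ((M / ν) ^ 2 * ‖u (ℓ + 1) - u ℓ‖ ^ 2)
              = (ν / 2) * ‖u (ℓ + 1) - u ℓ‖ ^ 2 := by
            field_simp
          linarith [heq ▸ hmul]
        have ha : (ν ^ 3) / (2 * M ^ 2) * ‖u ℓ - ustar‖ ^ 2
            ≤ H (u ℓ) - H (u (ℓ + 1)) := le_trans this a
        rw [hE ℓ, hE (ℓ + 1)]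
        linarith
      have h5 : ν ^ 3 / (L * M ^ 2) * E ℓ ≤ (ν ^ 3) / (2 * M ^ 2) * ‖u ℓ - ustar‖ ^ 2 := by
        have hmul := mul_le_mul_of_nonneg_left c
          (show (0:ℝ) ≤ ν ^ 3 / (L * M ^ 2) by positivity)
        have heq : ν ^ 3 / (L * M ^ 2) * ((L / 2) * ‖u ℓ - ustar‖ ^ 2)
            = (ν ^ 3) / (2 * M ^ 2) * ‖u ℓ - ustar‖ ^ 2 := by
          field_simp
        linarith [heq ▸ hmul]
      linarith
    have hqe : q * E ℓ = E ℓ - ν ^ 3 / (L * M ^ 2) * E ℓ := by rw [hq]; ring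
    linarith
  have geom : ∀ ℓ, E ℓ ≤ q ^ ℓ * E 0 := by
    intro ℓ
    induction ℓ with
    | zero => simp
    | succ k ih =>
      calc E (k + 1) ≤ q * E k := step k
        _ ≤ q * (q ^ k * E 0) := by nlinarith [hE0 k]
        _ = q ^ (k + 1) * E 0 := by ring
  have main : ∀ ℓ : ℕ, ‖u ℓ - ustar‖ ≤ Real.sqrt (L / ν) * q ^ ((ℓ : ℝ) / 2) * ‖u 0 - ustar‖ := by
    intro ℓ
    have hA : ‖u ℓ - ustar‖ ^ 2 ≤ (L / ν) * q ^ ℓ * ‖u 0 - ustar‖ ^ 2 := by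
      have h6 : (ν / 2) * ‖u ℓ - ustar‖ ^ 2 ≤ E ℓ := (hE ℓ) ▸ (h3 ℓ).1
      have h7 : E 0 ≤ (L / 2) * ‖u 0 - ustar‖ ^ 2 := (hE 0) ▸ (h3 0).2
      have h8 : E ℓ ≤ q ^ ℓ * ((L / 2) * ‖u 0 - ustar‖ ^ 2) := by
        refine (geom ℓ).trans ?_
        exact mul_le_mul_of_nonneg_left h7 (by positivity)
      rw [show (L / ν) * q ^ ℓ * ‖u 0 - ustar‖ ^ 2
          = (2 / ν) * (q ^ ℓ * ((L / 2) * ‖u 0 - ustar‖ ^ 2)) by field_simp]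
      rw [show ‖u ℓ - ustar‖ ^ 2 = (2 / ν) * ((ν / 2) * ‖u ℓ - ustar‖ ^ 2) by
        field_simp]
      exact mul_le_mul_of_nonneg_left (h6.trans h8) (by positivity)
    have := Real.sqrt_le_sqrt hA
    rw [Real.sqrt_sq (norm_nonneg _)] at this
    refine this.trans (le_of_eq ?_)
    rw [Real.sqrt_mul (by positivity), Real.sqrt_mul (by positivity),
      Real.sqrt_sq (norm_nonneg _)]
    congr 1
    congr 1
    rw [Real.sqrt_eq_rpow, ← Real.rpow_natCast q ℓ, ← Real.rpow_mul hq0.le]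
    ring_nf
  refine ⟨main, ?_⟩
  rw [tendsto_iff_norm_sub_tendsto_zero]
  have hsq : Real.sqrt q < 1 := by
    rw [show (1:ℝ) = Real.sqrt 1 by simp]
    exact Real.sqrt_lt_sqrt hq0.le hq1
  have hbound : ∀ ℓ : ℕ, ‖u ℓ - ustar‖
      ≤ (Real.sqrt (L / ν) * ‖u 0 - ustar‖) * (Real.sqrt q) ^ ℓ := by
    intro ℓ
    have : q ^ ((ℓ : ℝ) / 2) = (Real.sqrt q) ^ ℓ := by
      rw [Real.sqrt_eq_rpow, ← Real.rpow_natCast (q ^ ((1:ℝ)/2)) ℓ,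
        ← Real.rpow_mul hq0.le]
      congr 1
      ring
    have h := main ℓ
    rw [this] at h
    linarith [h]
  have hlim : Filter.Tendsto (fun ℓ : ℕ => (Real.sqrt (L / ν) * ‖u 0 - ustar‖) *
      (Real.sqrt q) ^ ℓ) Filter.atTop (nhds 0) := by
    rw [show (0:ℝ) = (Real.sqrt (L / ν) * ‖u 0 - ustar‖) * 0 by ring]
    exact (tendsto_pow_atTop_nhds_zero_of_lt_one (Real.sqrt_nonneg q) hsq).const_mul _
  exact squeeze_zero (fun ℓ => norm_nonneg _) hbound hlim
end

section
/- Let R > 0, ν > 0, C > 0, and suppose ⟨A(u) − A(v), u − v⟩ ≥ ν‖u − v‖² for all u, v ∈ H. Then for all u, v ∈ H with ‖u‖ ≤ R one has ⟨A(u) − A(v), u − v⟩ + B(u, u, u − v) − B(v, v, u − v) ≥ (ν − C·R)‖u − v‖². (Abstract form of the strong monotonicity estimate (eq:fstronglymonotone) in Theorem 4.10 for the operator F including the convection term; in the paper the constant is ν_F(R) = ν − √2·C_B·R, the factor √2 arising from Korn's inequality.) -/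
open RealInnerProductSpace

/-- Abstract form of the strong monotonicity estimate (eq:fstronglymonotone) in Theorem 4.10:
if `A` is `ν`-strongly monotone and `B` is trilinear, skew-symmetric and `C`-bounded, then for
`‖u‖ ≤ R` one has
`⟨A(u) − A(v), u − v⟩ + B(u,u,u−v) − B(v,v,u−v) ≥ (ν − CR)‖u − v‖²`. -/
theorem stmt_15 {H : Type*} [NormedAddCommGroup H] [InnerProductSpace ℝ H]
    (R ν C : ℝ) (hR : 0 < R) (hν : 0 < ν) (hC : 0 < C)
    (A : H → H) (B : H →ₗ[ℝ] H →ₗ[ℝ] H →ₗ[ℝ] ℝ)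
    (hskew : ∀ u v : H, B u v v = 0)
    (hbound : ∀ u v w : H, |B u v w| ≤ C * ‖u‖ * ‖v‖ * ‖w‖)
    (hmono : ∀ u v : H, ⟪A u - A v, u - v⟫ ≥ ν * ‖u - v‖ ^ 2)
    (u v : H) (hu : ‖u‖ ≤ R) :
    ⟪A u - A v, u - v⟫ + B u u (u - v) - B v v (u - v) ≥ (ν - C * R) * ‖u - v‖ ^ 2 := by
  have key : B u u (u - v) - B v v (u - v) = B (u - v) u (u - v) := by
    have h1 : B v (u - v) (u - v) = 0 := hskew v (u - v)
    have h2 : B (u - v) u (u - v) = B u u (u - v) - B v u (u - v) := by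
      simp [map_sub, LinearMap.sub_apply]; ring
    have h3 : B v (u - v) (u - v) = B v u (u - v) - B v v (u - v) := by
      simp [map_sub, LinearMap.sub_apply]; ring
    linarith
  have hb : |B (u - v) u (u - v)| ≤ C * R * ‖u - v‖ ^ 2 := by
    calc |B (u - v) u (u - v)| ≤ C * ‖u - v‖ * ‖u‖ * ‖u - v‖ := hbound _ _ _
      _ ≤ C * R * ‖u - v‖ ^ 2 := by
          rw [pow_two]
          nlinarith [norm_nonneg (u - v), mul_le_mul_of_nonneg_left hu hC.le,
            sq_nonneg (‖u - v‖)]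
  have hb' : B (u - v) u (u - v) ≥ -(C * R * ‖u - v‖ ^ 2) := by
    have := abs_le.mp hb; linarith [this.1]
  have hm := hmono u v
  rw [sub_mul]
  linarith
end
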